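/- arXiv:2602.16172 — 2 statements merged into one kernel-verified Lean document; each statement's English description precedes it below -/
import Mathlib

section
/- Fix reals d₂ > 0, β > 0, S₀ > 0, μ₂ > 0 with βS₀/μ₂ > 1, and θ ∈ ℝ, and for c > 0 define Δ_c(λ) = d₂(e^{λ sin θ} + e^{−λ sin θ} + e^{λ cos θ} + e^{−λ cos θ} − 4) − cλ + βS₀ − μ₂. Let c* > 0 and λ* > 0 be the critical speed and exponent (Δ_{c*}(λ*) = 0 and ∂Δ_c/∂λ = 0 at (λ*, c*)). Then for every c > c*, the equation Δ_c(λ) = 0 has exactly two positive roots λ₁ < λ* < λ₂, and moreover Δ_c(λ) > 0 for 0 < λ < λ₁, Δ_c(λ) < 0 for λ₁ < λ < λ₂, and Δ_c(λ) > 0 for λ > λ₂. -/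
/-! In λ, `charDelta` is strictly convex: it is `d₂` times a sum of functions `exp (λ a)`, and
`sin θ`, `cos θ` do not vanish together. For `c > c*` it is positive at `λ = 0` (as `βS₀ > μ₂`),
negative at `λ*` (as `Δ_c(λ*) = Δ_{c*}(λ*) - (c - c*) λ*`), and positive for large `λ`, where
it grows quadratically. A strictly convex function with this sign pattern has exactly two zeros,
one on each side of `λ*`, and is negative exactly between them. -/

noncomputable def charDelta (d₂ β S₀ μ₂ θ c lam : ℝ) : ℝ :=
  d₂ * (Real.exp (lam * Real.sin θ) + Real.exp (-(lam * Real.sin θ)) +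
        Real.exp (lam * Real.cos θ) + Real.exp (-(lam * Real.cos θ)) - 4) -
  c * lam + β * S₀ - μ₂

open Real Set

lemma two_add_sq_div_two_le_exp_add_exp_neg (x : ℝ) : 2 + x ^ 2 / 2 ≤ exp x + exp (-x) := by
  wlog hx : 0 ≤ x generalizing x
  · simpa [add_comm] using this (-x) (by linarith)
  nlinarith [quadratic_le_exp_of_nonneg hx, add_one_le_exp (-x)]

lemma convexOn_exp_mul (a : ℝ) : ConvexOn ℝ univ fun x => exp (x * a) :=
  convexOn_exp.comp_linearMap (LinearMap.mul ℝ ℝ |>.flip a)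

lemma strictConvexOn_exp_mul {a : ℝ} (ha : a ≠ 0) :
    StrictConvexOn ℝ univ fun x => exp (x * a) := by
  let L : ℝ →ₗ[ℝ] ℝ := LinearMap.mul ℝ ℝ |>.flip a
  exact (strictConvexOn_exp.subset (subset_univ _) (convex_univ.linear_image L)).comp_convexOn
    (L.convexOn convex_univ) (exp_monotone.monotoneOn _) fun _ _ _ _ h => mul_right_cancel₀ ha h

lemma StrictConvexOn.const_mul_add_affine {s : Set ℝ} {f : ℝ → ℝ} (hf : StrictConvexOn ℝ s f)
    {d : ℝ} (hd : 0 < d) (p q : ℝ) : StrictConvexOn ℝ s fun x => d * f x + p * x + q :=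
  ⟨hf.1, fun x hx y hy hxy a b ha hb hab => by
    have := hf.2 hx hy hxy ha hb hab
    simp only [smul_eq_mul] at this ⊢
    linear_combination d * this - q * hab⟩

lemma convexOn_exp_mul_add_exp_neg_mul (a : ℝ) :
    ConvexOn ℝ univ fun x => exp (x * a) + exp (-(x * a)) := by
  simp_rw [← mul_neg]
  exact (convexOn_exp_mul a).add (convexOn_exp_mul (-a))

lemma strictConvexOn_exp_mul_add_exp_neg_mul {a : ℝ} (ha : a ≠ 0) :
    StrictConvexOn ℝ univ fun x => exp (x * a) + exp (-(x * a)) := by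
  simp_rw [← mul_neg]
  exact (strictConvexOn_exp_mul ha).add (strictConvexOn_exp_mul (neg_ne_zero.2 ha))

lemma StrictConvexOn.neg_of_nonpos_of_nonpos {f : ℝ → ℝ} (hf : StrictConvexOn ℝ univ f)
    {x y z : ℝ} (hxy : x < y) (hyz : y < z) (hx : f x ≤ 0) (hz : f z ≤ 0) : f y < 0 :=
  (hf.lt_on_openSegment (mem_univ x) (mem_univ z) (hxy.trans hyz).ne
    (by rw [openSegment_eq_Ioo (hxy.trans hyz)]; exact ⟨hxy, hyz⟩)).trans_le (max_le hx hz)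

lemma StrictConvexOn.sign_of_zeros {f : ℝ → ℝ} (hf : StrictConvexOn ℝ univ f) {x₁ x₂ : ℝ}
    (h₁₂ : x₁ < x₂) (h₁ : f x₁ = 0) (h₂ : f x₂ = 0) :
    (∀ x < x₁, 0 < f x) ∧ (∀ x, x₁ < x → x < x₂ → f x < 0) ∧ (∀ x, x₂ < x → 0 < f x) ∧
      ∀ x, f x = 0 → x = x₁ ∨ x = x₂ := by
  have left : ∀ x < x₁, 0 < f x := fun x hx => by
    by_contra! h
    exact (hf.neg_of_nonpos_of_nonpos hx h₁₂ h h₂.le).ne h₁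
  have mid : ∀ x, x₁ < x → x < x₂ → f x < 0 := fun x hx₁ hx₂ =>
    hf.neg_of_nonpos_of_nonpos hx₁ hx₂ h₁.le h₂.le
  have right : ∀ x, x₂ < x → 0 < f x := fun x hx => by
    by_contra! h
    exact (hf.neg_of_nonpos_of_nonpos h₁₂ hx h₁.le h).ne h₂
  refine ⟨left, mid, right, fun x hx => ?_⟩
  rcases lt_trichotomy x x₁ with h | h | h
  · exact absurd hx (left x h).ne'
  · exact .inl h
  rcases lt_trichotomy x x₂ with h' | h' | h'
  · exact absurd hx (mid x h h').ne
  · exact .inr h'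
  · exact absurd hx (right x h').ne'

lemma StrictConvexOn.exists_zeros {f : ℝ → ℝ} (hf : StrictConvexOn ℝ univ f) {a m b : ℝ}
    (ham : a ≤ m) (hmb : m ≤ b) (ha : 0 < f a) (hm : f m < 0) (hb : 0 < f b) :
    ∃ x₁ x₂, a < x₁ ∧ x₁ < m ∧ m < x₂ ∧ f x₁ = 0 ∧ f x₂ = 0 := by
  have hcont : ContinuousOn f univ := hf.convexOn.continuousOn isOpen_univ
  obtain ⟨x₁, ⟨hax₁, hx₁m⟩, h₁⟩ :=
    intermediate_value_Icc' ham (hcont.mono (subset_univ _)) ⟨hm.le, ha.le⟩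
  obtain ⟨x₂, ⟨hmx₂, -⟩, h₂⟩ :=
    intermediate_value_Icc hmb (hcont.mono (subset_univ _)) ⟨hm.le, hb.le⟩
  refine ⟨x₁, x₂, hax₁.lt_of_ne ?_, hx₁m.lt_of_ne ?_, hmx₂.lt_of_ne ?_, h₁, h₂⟩ <;> rintro rfl
  exacts [ha.ne' h₁, hm.ne h₁, hm.ne h₂]

section charDelta

variable {d₂ β S₀ μ₂ θ : ℝ}

lemma strictConvexOn_charDelta (hd₂ : 0 < d₂) (c : ℝ) :
    StrictConvexOn ℝ univ (charDelta d₂ β S₀ μ₂ θ c) := by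
  have hsum : StrictConvexOn ℝ univ fun x =>
      (exp (x * sin θ) + exp (-(x * sin θ))) + (exp (x * cos θ) + exp (-(x * cos θ))) := by
    by_cases hs : sin θ = 0
    · have hc : cos θ ≠ 0 := by
        intro hc; simpa [hs, hc] using sin_sq_add_cos_sq θ
      exact (convexOn_exp_mul_add_exp_neg_mul _).add_strictConvexOn
        (strictConvexOn_exp_mul_add_exp_neg_mul hc)
    · exact (strictConvexOn_exp_mul_add_exp_neg_mul hs).add_convexOn
        (convexOn_exp_mul_add_exp_neg_mul _)
  convert hsum.const_mul_add_affine hd₂ (-c) (β * S₀ - μ₂ - 4 * d₂) using 1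
  funext x
  unfold charDelta
  ring

lemma charDelta_zero (c : ℝ) : charDelta d₂ β S₀ μ₂ θ c 0 = β * S₀ - μ₂ := by
  norm_num [charDelta]

lemma charDelta_eq_sub (c c' lam : ℝ) :
    charDelta d₂ β S₀ μ₂ θ c lam = charDelta d₂ β S₀ μ₂ θ c' lam - (c - c') * lam := by
  unfold charDelta
  ring

lemma quadratic_le_charDelta (hd₂ : 0 ≤ d₂) (c lam : ℝ) :
    d₂ * lam ^ 2 / 2 - c * lam + β * S₀ - μ₂ ≤ charDelta d₂ β S₀ μ₂ θ c lam := by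
  have hs := two_add_sq_div_two_le_exp_add_exp_neg (lam * sin θ)
  have hc := two_add_sq_div_two_le_exp_add_exp_neg (lam * cos θ)
  have hpyth : (lam * sin θ) ^ 2 + (lam * cos θ) ^ 2 = lam ^ 2 := by
    linear_combination lam ^ 2 * sin_sq_add_cos_sq θ
  unfold charDelta
  nlinarith

lemma exists_gt_charDelta_pos (hd₂ : 0 < d₂) (hμβ : μ₂ < β * S₀) (c x : ℝ) :
    ∃ M, x < M ∧ 0 < charDelta d₂ β S₀ μ₂ θ c M := by
  have hc : 0 ≤ 2 * |c| / d₂ := by positivity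
  set M := |x| + 1 + 2 * |c| / d₂
  have hxM : x < M := by linarith [le_abs_self x]
  have hMpos : 0 < M := by positivity
  have hcM : c ≤ d₂ * M / 2 := by
    have : d₂ * (2 * |c| / d₂) = 2 * |c| := mul_div_cancel₀ _ hd₂.ne'
    nlinarith [abs_nonneg x, le_abs_self c]
  refine ⟨M, hxM, ?_⟩
  nlinarith [quadratic_le_charDelta (β := β) (S₀ := S₀) (μ₂ := μ₂) (θ := θ) hd₂.le c M,
    mul_nonneg hMpos.le (sub_nonneg.2 hcM)]

end charDelta

theorem stmt_3_general (d₂ β S₀ μ₂ θ : ℝ)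
    (hd₂ : 0 < d₂) (hμ₂ : 0 < μ₂)
    (hR₀ : 1 < β * S₀ / μ₂)
    (cstar lamstar : ℝ) (hlamstar : 0 < lamstar)
    (hroot : charDelta d₂ β S₀ μ₂ θ cstar lamstar = 0) :
    ∀ c : ℝ, cstar < c →
      ∃ lam₁ lam₂ : ℝ, 0 < lam₁ ∧ lam₁ < lamstar ∧ lamstar < lam₂ ∧
        charDelta d₂ β S₀ μ₂ θ c lam₁ = 0 ∧ charDelta d₂ β S₀ μ₂ θ c lam₂ = 0 ∧
        (∀ lam : ℝ, 0 < lam → charDelta d₂ β S₀ μ₂ θ c lam = 0 → lam = lam₁ ∨ lam = lam₂) ∧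
        (∀ lam : ℝ, 0 < lam → lam < lam₁ → 0 < charDelta d₂ β S₀ μ₂ θ c lam) ∧
        (∀ lam : ℝ, lam₁ < lam → lam < lam₂ → charDelta d₂ β S₀ μ₂ θ c lam < 0) ∧
        (∀ lam : ℝ, lam₂ < lam → 0 < charDelta d₂ β S₀ μ₂ θ c lam) := by
  intro c hc
  have hμβ : μ₂ < β * S₀ := by rwa [one_lt_div hμ₂] at hR₀
  have hconv : StrictConvexOn ℝ univ (charDelta d₂ β S₀ μ₂ θ c) := strictConvexOn_charDelta hd₂ c
  have hzero : 0 < charDelta d₂ β S₀ μ₂ θ c 0 := by rw [charDelta_zero]; linarith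
  have hstar : charDelta d₂ β S₀ μ₂ θ c lamstar < 0 := by
    rw [charDelta_eq_sub c cstar, hroot]; nlinarith
  obtain ⟨M, hM, hfM⟩ := exists_gt_charDelta_pos (θ := θ) hd₂ hμβ c lamstar
  obtain ⟨lam₁, lam₂, h₁pos, h₁, h₂, hz₁, hz₂⟩ :=
    hconv.exists_zeros hlamstar.le hM.le hzero hstar hfM
  obtain ⟨left, mid, right, zeros⟩ := hconv.sign_of_zeros (h₁.trans h₂) hz₁ hz₂
  exact ⟨lam₁, lam₂, h₁pos, h₁, h₂, hz₁, hz₂, fun lam _ => zeros lam, fun lam _ => left lam,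
    mid, right⟩

theorem stmt_3 (d₂ β S₀ μ₂ θ : ℝ)
    (hd₂ : 0 < d₂) (hβ : 0 < β) (hS₀ : 0 < S₀) (hμ₂ : 0 < μ₂)
    (hR₀ : 1 < β * S₀ / μ₂)
    (cstar lamstar : ℝ) (hcstar : 0 < cstar) (hlamstar : 0 < lamstar)
    (hroot : charDelta d₂ β S₀ μ₂ θ cstar lamstar = 0)
    (hcrit : deriv (charDelta d₂ β S₀ μ₂ θ cstar) lamstar = 0) :
    ∀ c : ℝ, cstar < c →
      ∃ lam₁ lam₂ : ℝ, 0 < lam₁ ∧ lam₁ < lamstar ∧ lamstar < lam₂ ∧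
        charDelta d₂ β S₀ μ₂ θ c lam₁ = 0 ∧ charDelta d₂ β S₀ μ₂ θ c lam₂ = 0 ∧
        (∀ lam : ℝ, 0 < lam → charDelta d₂ β S₀ μ₂ θ c lam = 0 → lam = lam₁ ∨ lam = lam₂) ∧
        (∀ lam : ℝ, 0 < lam → lam < lam₁ → 0 < charDelta d₂ β S₀ μ₂ θ c lam) ∧
        (∀ lam : ℝ, lam₁ < lam → lam < lam₂ → charDelta d₂ β S₀ μ₂ θ c lam < 0) ∧
        (∀ lam : ℝ, lam₂ < lam → 0 < charDelta d₂ β S₀ μ₂ θ c lam) :=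
  stmt_3_general d₂ β S₀ μ₂ θ hd₂ hμ₂ hR₀ cstar lamstar hlamstar hroot
end

section
/- Let Λ, β, α, μ₁, μ₂, d₁, d₂ > 0, θ ∈ ℝ, S₀ = Λ/μ₁, βS₀/μ₂ > 1, c > c*, and let λ₁ be the smaller positive root of Δ_c. Fix I₀ ≥ (βS₀ − μ₂)/(αμ₂) and set I⁺(ξ) = min{e^{λ₁ξ}, I₀}. Then there exist ε₁ ∈ (0, λ₁) and M₁ > 1 such that the function S⁻(ξ) = max{S₀(1 − M₁e^{ε₁ξ}), 0} satisfies, for every ξ ≠ (1/ε₁)·ln(1/M₁), the inequality c·(S⁻)'(ξ) ≤ d₁𝔍[S⁻](ξ) + Λ − βS⁻(ξ)I⁺(ξ)/(1 + αI⁺(ξ)) − μ₁S⁻(ξ), where 𝔍[φ](ξ) = φ(ξ + sin θ) + φ(ξ − sin θ) + φ(ξ + cos θ) + φ(ξ − cos θ) − 4φ(ξ). -/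
/-- Discrete Laplacian in direction `θ`. -/
noncomputable def lap (θ : ℝ) (φ : ℝ → ℝ) (ξ : ℝ) : ℝ :=
  φ (ξ + Real.sin θ) + φ (ξ - Real.sin θ) + φ (ξ + Real.cos θ) + φ (ξ - Real.cos θ) - 4 * φ ξ

/-!
Left of the threshold `ξ* = (1/ε₁) log (1/M₁)`, `S⁻` agrees near `ξ` with the smooth profile
`S₀ (1 - M₁ e^{ε₁ ξ})` and dominates it everywhere, so its derivative is explicit and
`𝔍[S⁻](ξ) ≥ -S₀ M₁ e^{ε₁ ξ} K(ε₁)`, where `K` is the symbol of `𝔍` on exponentials. Since `ξ < 0`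
there, `I⁺(ξ) ≤ e^{λ₁ ξ} ≤ e^{ε₁ ξ}`, and the inequality reduces to
`β ≤ M₁ (μ₁ - d₁ K(ε₁) + c ε₁)`. As `K(0) = 0`, continuity gives `ε₁` with
`d₁ K(ε₁) - c ε₁ < μ₁`, and then `M₁` is taken large. Right of `ξ*`, `S⁻` vanishes near `ξ` and
`𝔍[S⁻](ξ) ≥ 0`, so `Λ > 0` suffices.
-/

open Real Filter Topology

noncomputable def lapSymbol (θ ε : ℝ) : ℝ :=
  exp (ε * sin θ) + exp (-(ε * sin θ)) + exp (ε * cos θ) + exp (-(ε * cos θ)) - 4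

lemma continuous_lapSymbol (θ : ℝ) : Continuous (lapSymbol θ) := by
  unfold lapSymbol; fun_prop

lemma lapSymbol_zero (θ : ℝ) : lapSymbol θ 0 = 0 := by
  norm_num [lapSymbol]

lemma lap_exp_mul (θ ε ξ : ℝ) :
    lap θ (fun x => exp (ε * x)) ξ = exp (ε * ξ) * lapSymbol θ ε := by
  simp only [lap, lapSymbol, sub_eq_add_neg, mul_add, mul_neg, exp_add]
  ring

lemma lap_const_add_mul (θ a b : ℝ) (φ : ℝ → ℝ) (ξ : ℝ) :
    lap θ (fun x => a + b * φ x) ξ = b * lap θ φ ξ := by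
  simp only [lap]; ring

lemma lap_le_lap_of_le_of_eq {θ ξ : ℝ} {φ ψ : ℝ → ℝ} (hle : ∀ x, φ x ≤ ψ x) (heq : φ ξ = ψ ξ) :
    lap θ φ ξ ≤ lap θ ψ ξ := by
  simp only [lap, heq]
  linarith [hle (ξ + sin θ), hle (ξ - sin θ), hle (ξ + cos θ), hle (ξ - cos θ)]

lemma lap_nonneg_of_nonneg_of_eq_zero {θ ξ : ℝ} {φ : ℝ → ℝ} (hφ : ∀ x, 0 ≤ φ x)
    (hξ : φ ξ = 0) : 0 ≤ lap θ φ ξ := by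
  simpa [lap] using lap_le_lap_of_le_of_eq (θ := θ) (φ := fun _ => 0) hφ hξ.symm

lemma exists_mem_Ioo_mul_lapSymbol_sub_lt (θ d c : ℝ) {μ lam : ℝ} (hμ : 0 < μ)
    (hlam : 0 < lam) : ∃ ε, 0 < ε ∧ ε < lam ∧ d * lapSymbol θ ε - c * ε < μ := by
  have hlim : Tendsto (fun ε => d * lapSymbol θ ε - c * ε) (𝓝 0) (𝓝 0) := by
    have := (((continuous_lapSymbol θ).tendsto 0).const_mul d).sub
      ((continuous_const_mul c).tendsto 0)
    simpa [lapSymbol_zero] using this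
  obtain ⟨ε, hε, hεI⟩ := (((hlim.eventually_lt_const hμ).filter_mono nhdsWithin_le_nhds).and
    (Ioo_mem_nhdsGT hlam)).exists
  exact ⟨ε, hεI.1, hεI.2, hε⟩

lemma max_zero_eventuallyEq_of_pos {g : ℝ → ℝ} {ξ : ℝ} (hg : ContinuousAt g ξ) (hξ : 0 < g ξ) :
    (fun x => max (g x) 0) =ᶠ[𝓝 ξ] g :=
  (continuousAt_const.eventually_lt hg hξ).mono fun _ hx => max_eq_left hx.le

lemma max_zero_eventuallyEq_of_neg {g : ℝ → ℝ} {ξ : ℝ} (hg : ContinuousAt g ξ) (hξ : g ξ < 0) :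
    (fun x => max (g x) 0) =ᶠ[𝓝 ξ] fun _ => 0 :=
  (hg.eventually_lt continuousAt_const hξ).mono fun _ hx => max_eq_right hx.le

lemma incidence_le {β α S₀ s I J : ℝ} (hβ : 0 ≤ β) (hα : 0 ≤ α) (hs : 0 ≤ s) (hsS : s ≤ S₀)
    (hI : 0 ≤ I) (hIJ : I ≤ J) : β * s * I / (1 + α * I) ≤ β * S₀ * J :=
  calc β * s * I / (1 + α * I) ≤ β * s * I := div_le_self (by positivity) (by nlinarith)
    _ = β * (s * I) := by ring
    _ ≤ β * (S₀ * J) := mul_le_mul_of_nonneg_left (mul_le_mul hsS hIJ hI (hs.trans hsS)) hβ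
    _ = β * S₀ * J := by ring

lemma eq_mul_log_of_mul_exp_eq_one {M ε ξ : ℝ} (hε : ε ≠ 0) (h : M * exp (ε * ξ) = 1) :
    ξ = 1 / ε * log (1 / M) := by
  have hexp : exp (ε * ξ) = 1 / M := eq_one_div_of_mul_eq_one_right h
  rw [← hexp, log_exp]
  field_simp

section LowerSolution

/-- The lower solution of the paper is `S⁻ = max (lowerProfile S₀ M ε) 0`. -/
noncomputable def lowerProfile (S₀ M ε x : ℝ) : ℝ := S₀ * (1 - M * exp (ε * x))

lemma hasDerivAt_lowerProfile (S₀ M ε ξ : ℝ) :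
    HasDerivAt (lowerProfile S₀ M ε) (-(S₀ * M * ε * exp (ε * ξ))) ξ := by
  have := ((((hasDerivAt_id ξ).const_mul ε).exp.const_mul M).const_sub 1).const_mul S₀
  refine this.congr_deriv ?_
  simp only [id_eq, mul_one]
  ring

lemma lap_lowerProfile (θ S₀ M ε ξ : ℝ) :
    lap θ (lowerProfile S₀ M ε) ξ = -(S₀ * M * exp (ε * ξ) * lapSymbol θ ε) := by
  have : lowerProfile S₀ M ε = fun x => S₀ + -(S₀ * M) * exp (ε * x) := by
    funext x; simp only [lowerProfile]; ring
  rw [this, lap_const_add_mul, lap_exp_mul]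
  ring

/-- `I` stands for the value `I⁺(ξ)` of the infective component. -/
def IsLowerSolutionAt (θ c d₁ Λ β α μ₁ : ℝ) (S : ℝ → ℝ) (I ξ : ℝ) : Prop :=
  c * deriv S ξ ≤ d₁ * lap θ S ξ + Λ - β * S ξ * I / (1 + α * I) - μ₁ * S ξ

variable {S₀ M ε θ c d₁ Λ β α μ₁ I ξ : ℝ}

lemma isLowerSolutionAt_of_lowerProfile_neg (hd₁ : 0 ≤ d₁) (hΛ : 0 ≤ Λ)
    (hneg : lowerProfile S₀ M ε ξ < 0) :
    IsLowerSolutionAt θ c d₁ Λ β α μ₁ (fun x => max (lowerProfile S₀ M ε x) 0) I ξ := by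
  have hmax : max (lowerProfile S₀ M ε ξ) 0 = 0 := max_eq_right hneg.le
  have hderiv : deriv (fun x => max (lowerProfile S₀ M ε x) 0) ξ = 0 := by
    rw [(max_zero_eventuallyEq_of_neg (hasDerivAt_lowerProfile S₀ M ε ξ).continuousAt
      hneg).deriv_eq, deriv_const]
  have hlap : 0 ≤ lap θ (fun x => max (lowerProfile S₀ M ε x) 0) ξ :=
    lap_nonneg_of_nonneg_of_eq_zero (fun _ => le_max_right _ _) hmax
  dsimp only [IsLowerSolutionAt]
  rw [hderiv, hmax]
  simp only [mul_zero, zero_mul, zero_div, sub_zero]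
  linarith [mul_nonneg hd₁ hlap]

lemma isLowerSolutionAt_of_lowerProfile_pos {lam : ℝ} (hS₀ : 0 ≤ S₀) (hM : 1 ≤ M) (hε : 0 < ε)
    (hεlam : ε ≤ lam) (hd₁ : 0 ≤ d₁) (hβ : 0 ≤ β) (hα : 0 ≤ α) (hI : 0 ≤ I)
    (hIlam : I ≤ exp (lam * ξ)) (hΛ : Λ = μ₁ * S₀)
    (hMβ : β ≤ M * (μ₁ - (d₁ * lapSymbol θ ε - c * ε))) (hpos : 0 < lowerProfile S₀ M ε ξ) :
    IsLowerSolutionAt θ c d₁ Λ β α μ₁ (fun x => max (lowerProfile S₀ M ε x) 0) I ξ := by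
  set E := exp (ε * ξ)
  have hME : M * E < 1 := sub_pos.1 (pos_of_mul_pos_right hpos hS₀)
  have hξ : ξ ≤ 0 := by
    have : ε * ξ < 0 := exp_lt_one_iff.1 (by nlinarith [exp_pos (ε * ξ)])
    nlinarith
  have hIE : I ≤ E := hIlam.trans (exp_le_exp.2 (by nlinarith))
  have hmax : max (lowerProfile S₀ M ε ξ) 0 = lowerProfile S₀ M ε ξ := max_eq_left hpos.le
  have hderiv : deriv (fun x => max (lowerProfile S₀ M ε x) 0) ξ = -(S₀ * M * ε * E) := by
    rw [(max_zero_eventuallyEq_of_pos (hasDerivAt_lowerProfile S₀ M ε ξ).continuousAt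
      hpos).deriv_eq, (hasDerivAt_lowerProfile S₀ M ε ξ).deriv]
  have hlap : -(S₀ * M * E * lapSymbol θ ε) ≤ lap θ (fun x => max (lowerProfile S₀ M ε x) 0) ξ :=
    lap_lowerProfile θ S₀ M ε ξ ▸ lap_le_lap_of_le_of_eq (fun _ => le_max_left _ _) hmax.symm
  have hinc : β * max (lowerProfile S₀ M ε ξ) 0 * I / (1 + α * I) ≤ β * S₀ * E := by
    refine incidence_le hβ hα (le_max_right _ _) (max_le ?_ hS₀) hI hIE
    have : 0 ≤ S₀ * (M * E) := by positivity
    simp only [lowerProfile]; linarith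
  have hgain : 0 ≤ S₀ * E * (M * (μ₁ - (d₁ * lapSymbol θ ε - c * ε)) - β) :=
    mul_nonneg (by positivity) (sub_nonneg.2 hMβ)
  have hprofile : lowerProfile S₀ M ε ξ = S₀ * (1 - M * E) := rfl
  dsimp only [IsLowerSolutionAt]
  rw [hderiv]
  rw [hmax, hprofile] at hinc ⊢
  linarith [mul_le_mul_of_nonneg_left hlap hd₁]

end LowerSolution

theorem stmt_6_general (Λ β α μ₁ μ₂ d₁ θ : ℝ)
    (hΛ : 0 < Λ) (hβ : 0 < β) (hα : 0 < α) (hμ₁ : 0 < μ₁) (hμ₂ : 0 < μ₂)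
    (hd₁ : 0 < d₁)
    (S₀ : ℝ) (hS₀ : S₀ = Λ / μ₁) (hR₀ : 1 < β * S₀ / μ₂)
    (c lam₁ : ℝ)
    (hlam₁ : 0 < lam₁)
    (I₀ : ℝ) (hI₀ : (β * S₀ - μ₂) / (α * μ₂) ≤ I₀)
    (Iplus : ℝ → ℝ) (hIplus : ∀ ξ, Iplus ξ = min (Real.exp (lam₁ * ξ)) I₀) :
    ∃ ε₁ M₁ : ℝ, 0 < ε₁ ∧ ε₁ < lam₁ ∧ 1 < M₁ ∧
      ∀ ξ : ℝ, ξ ≠ (1 / ε₁) * Real.log (1 / M₁) →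
        c * deriv (fun x => max (S₀ * (1 - M₁ * Real.exp (ε₁ * x))) 0) ξ ≤
          d₁ * lap θ (fun x => max (S₀ * (1 - M₁ * Real.exp (ε₁ * x))) 0) ξ + Λ
            - β * max (S₀ * (1 - M₁ * Real.exp (ε₁ * ξ))) 0 * Iplus ξ / (1 + α * Iplus ξ)
            - μ₁ * max (S₀ * (1 - M₁ * Real.exp (ε₁ * ξ))) 0 := by
  have hS₀pos : 0 < S₀ := hS₀ ▸ div_pos hΛ hμ₁
  have hΛS₀ : Λ = μ₁ * S₀ := by rw [hS₀]; field_simp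
  have hI₀nonneg : 0 ≤ I₀ :=
    (div_nonneg (sub_nonneg.2 ((one_lt_div hμ₂).1 hR₀).le) (by positivity)).trans hI₀
  obtain ⟨ε, hε, hεlam, hrate⟩ := exists_mem_Ioo_mul_lapSymbol_sub_lt θ d₁ c hμ₁ hlam₁
  set M := max 2 (β / (μ₁ - (d₁ * lapSymbol θ ε - c * ε)))
  have hM : 1 < M := one_lt_two.trans_le (le_max_left _ _)
  have hMβ : β ≤ M * (μ₁ - (d₁ * lapSymbol θ ε - c * ε)) :=
    (div_le_iff₀ (sub_pos.2 hrate)).1 (le_max_right _ _)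
  refine ⟨ε, M, hε, hεlam, hM, fun ξ hξ => ?_⟩
  have hI : 0 ≤ Iplus ξ ∧ Iplus ξ ≤ exp (lam₁ * ξ) := by
    rw [hIplus]; exact ⟨le_min (exp_pos _).le hI₀nonneg, min_le_left _ _⟩
  have hprofile : lowerProfile S₀ M ε ξ ≠ 0 := by
    intro h
    have : 1 - M * exp (ε * ξ) = 0 := (mul_eq_zero.1 h).resolve_left hS₀pos.ne'
    exact hξ (eq_mul_log_of_mul_exp_eq_one hε.ne' (by linarith))
  rcases hprofile.lt_or_gt with hneg | hpos
  · exact isLowerSolutionAt_of_lowerProfile_neg hd₁.le hΛ.le hneg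
  · exact isLowerSolutionAt_of_lowerProfile_pos hS₀pos.le hM.le hε hεlam.le hd₁.le hβ.le hα.le
      hI.1 hI.2 hΛS₀ hMβ hpos

theorem stmt_6 (Λ β α μ₁ μ₂ d₁ d₂ θ : ℝ)
    (hΛ : 0 < Λ) (hβ : 0 < β) (hα : 0 < α) (hμ₁ : 0 < μ₁) (hμ₂ : 0 < μ₂)
    (hd₁ : 0 < d₁) (hd₂ : 0 < d₂)
    (S₀ : ℝ) (hS₀ : S₀ = Λ / μ₁) (hR₀ : 1 < β * S₀ / μ₂)
    (cstar lamstar c lam₁ : ℝ)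
    (hcstar : 0 < cstar) (hlamstar : 0 < lamstar)
    (hcritroot : charDelta d₂ β S₀ μ₂ θ cstar lamstar = 0)
    (hcritderiv : deriv (charDelta d₂ β S₀ μ₂ θ cstar) lamstar = 0)
    (hc : cstar < c)
    (hlam₁ : 0 < lam₁) (hroot : charDelta d₂ β S₀ μ₂ θ c lam₁ = 0)
    (hsmallest : ∀ lam : ℝ, 0 < lam → charDelta d₂ β S₀ μ₂ θ c lam = 0 → lam₁ ≤ lam)
    (I₀ : ℝ) (hI₀ : (β * S₀ - μ₂) / (α * μ₂) ≤ I₀)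
    (Iplus : ℝ → ℝ) (hIplus : ∀ ξ, Iplus ξ = min (Real.exp (lam₁ * ξ)) I₀) :
    ∃ ε₁ M₁ : ℝ, 0 < ε₁ ∧ ε₁ < lam₁ ∧ 1 < M₁ ∧
      ∀ ξ : ℝ, ξ ≠ (1 / ε₁) * Real.log (1 / M₁) →
        c * deriv (fun x => max (S₀ * (1 - M₁ * Real.exp (ε₁ * x))) 0) ξ ≤
          d₁ * lap θ (fun x => max (S₀ * (1 - M₁ * Real.exp (ε₁ * x))) 0) ξ + Λ
            - β * max (S₀ * (1 - M₁ * Real.exp (ε₁ * ξ))) 0 * Iplus ξ / (1 + α * Iplus ξ)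
            - μ₁ * max (S₀ * (1 - M₁ * Real.exp (ε₁ * ξ))) 0 :=
  stmt_6_general Λ β α μ₁ μ₂ d₁ θ hΛ hβ hα hμ₁ hμ₂ hd₁ S₀ hS₀ hR₀ c lam₁ hlam₁ I₀ hI₀ Iplus hIplus
end
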